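/- Let 𝒢 be a torsion class in mod-Λ, let θ₀, θ₁ ∈ V_Λ = Hom(K₀Λ, ℝ), and let θ_t = tθ₁ + (1−t)θ₀. Then 𝒫(θ₀) = 𝒫(θ₁) if and only if: (1) for any M ∈ 𝒢 and 0 < t < 1 with θ_t ∈ D_𝒢(M), the whole path satisfies θ_t(M) = 0 for all t ∈ [0,1]; (2) if θ₀ ∈ D_𝒢(L) then d/dt θ_t(L)|_{t=0} ≤ 0; (3) if θ₁ ∈ D_𝒢(R) then d/dt θ_t(R)|_{t=1} ≥ 0. In particular, for any pseudo-torsion class 𝒫, the set {θ : 𝒫(θ) = 𝒫} is convex. -/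

import Mathlib

/-!
Common framework: a torsion class `𝒢` in `mod-Λ` is modelled as a predicate
`G : ModuleCat R → Prop` (closed under isomorphism, quotients and extensions).
Strict subobjects, fibrations, cofibrations, strict morphisms, pseudo-torsion
classes etc. follow the definitions of the paper.
-/

namespace PaperTC

variable {R : Type} [Ring R]

/-- Membership of a (type-level) module in a class of modules. -/
def Mem (G : ModuleCat.{0} R → Prop) (M : Type) [AddCommGroup M] [Module R M] : Prop :=
  G (ModuleCat.of R M)

/-- `A` is a strict subobject of `M` (w.r.t. the torsion class `G`):
`A` lies in `G` and `A ⊓ B'` lies in `G` for every subobject `B'` of `M`. -/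
def IsStrictSub (G : ModuleCat.{0} R → Prop) {M : Type} [AddCommGroup M] [Module R M]
    (A : Submodule R M) : Prop :=
  Mem G ↥A ∧ ∀ B' : Submodule R M, Mem G ↥B' → Mem G ↥(A ⊓ B')

/-- A fibration is a surjection whose kernel is a strict subobject of the source. -/
def IsFibration (G : ModuleCat.{0} R → Prop) {M N : Type} [AddCommGroup M] [Module R M]
    [AddCommGroup N] [Module R N] (f : M →ₗ[R] N) : Prop :=
  Function.Surjective f ∧ IsStrictSub G (LinearMap.ker f)

/-- A strict morphism: kernel is a strict subobject of the source and image a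
strict subobject of the target. -/
def IsStrictMorphism (G : ModuleCat.{0} R → Prop) {M N : Type} [AddCommGroup M] [Module R M]
    [AddCommGroup N] [Module R N] (f : M →ₗ[R] N) : Prop :=
  IsStrictSub G (LinearMap.ker f) ∧ IsStrictSub G (LinearMap.range f)

/-- `G` is a torsion class in `mod-Λ`. -/
structure IsTorsionClass (G : ModuleCat.{0} R → Prop) : Prop where
  iso_closed : ∀ (M N : Type) [AddCommGroup M] [Module R M] [AddCommGroup N] [Module R N],
      (M ≃ₗ[R] N) → Mem G M → Mem G N
  zero_mem : ∀ (M : Type) [AddCommGroup M] [Module R M], Subsingleton M → Mem G M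
  quot_closed : ∀ (M : Type) [AddCommGroup M] [Module R M] (N : Submodule R M),
      Mem G M → Mem G (M ⧸ N)
  ext_closed : ∀ (A B C : Type) [AddCommGroup A] [Module R A] [AddCommGroup B] [Module R B]
      [AddCommGroup C] [Module R C] (f : A →ₗ[R] B) (g : B →ₗ[R] C),
      Function.Injective f → Function.Surjective g →
      LinearMap.range f = LinearMap.ker g → Mem G A → Mem G C → Mem G B

/-- A pseudo-torsion class `P` in the torsion class `G`: nonempty (contains zero
objects), closed under strict quotients and under strict extensions. -/
structure IsPseudoTorsionClass (G P : ModuleCat.{0} R → Prop) : Prop where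
  subset : ∀ M : ModuleCat.{0} R, P M → G M
  zero_mem : ∀ (M : Type) [AddCommGroup M] [Module R M], Subsingleton M → Mem G M → Mem P M
  quot_closed : ∀ (M : Type) [AddCommGroup M] [Module R M] (A : Submodule R M),
      IsStrictSub G A → Mem P M → Mem P (M ⧸ A)
  ext_closed : ∀ (A B C : Type) [AddCommGroup A] [Module R A] [AddCommGroup B] [Module R B]
      [AddCommGroup C] [Module R C] (f : A →ₗ[R] B) (g : B →ₗ[R] C),
      Function.Injective f → Function.Surjective g →
      LinearMap.range f = LinearMap.ker g → IsStrictSub G (LinearMap.range f) →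
      Mem P A → Mem P C → Mem P B

/-- A pseudo-torsionfree class `Q` in the torsion class `G`. -/
structure IsPseudoTorsionFreeClass (G Q : ModuleCat.{0} R → Prop) : Prop where
  subset : ∀ M : ModuleCat.{0} R, Q M → G M
  zero_mem : ∀ (M : Type) [AddCommGroup M] [Module R M], Subsingleton M → Mem G M → Mem Q M
  sub_closed : ∀ (M : Type) [AddCommGroup M] [Module R M] (A : Submodule R M),
      IsStrictSub G A → Mem Q M → Mem Q ↥A
  ext_closed : ∀ (A B C : Type) [AddCommGroup A] [Module R A] [AddCommGroup B] [Module R B]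
      [AddCommGroup C] [Module R C] (f : A →ₗ[R] B) (g : B →ₗ[R] C),
      Function.Injective f → Function.Surjective g →
      LinearMap.range f = LinearMap.ker g → IsStrictSub G (LinearMap.range f) →
      Mem Q A → Mem Q C → Mem Q B

/-- `Y` lies in the right perpendicular class `X ⟂`: no nonzero strict morphism
from an object of `X` to `Y`. -/
def MemRightPerp (G X : ModuleCat.{0} R → Prop) (Y : Type) [AddCommGroup Y] [Module R Y] : Prop :=
  Mem G Y ∧ ∀ M : ModuleCat.{0} R, X M → ∀ f : M →ₗ[R] Y, IsStrictMorphism G f → f = 0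

/-- `M` lies in the left perpendicular class `⟂ Y`. -/
def MemLeftPerp (G Y : ModuleCat.{0} R → Prop) (M : Type) [AddCommGroup M] [Module R M] : Prop :=
  Mem G M ∧ ∀ N : ModuleCat.{0} R, Y N → ∀ f : M →ₗ[R] N, IsStrictMorphism G f → f = 0

/-- A pseudo-wide subcategory `W` of `G`. -/
structure IsPseudoWide (G W : ModuleCat.{0} R → Prop) : Prop where
  subset : ∀ M : ModuleCat.{0} R, W M → G M
  zero_mem : ∀ (M : Type) [AddCommGroup M] [Module R M], Subsingleton M → Mem G M → Mem W M
  kic : ∀ (A B : Type) [AddCommGroup A] [Module R A] [AddCommGroup B] [Module R B],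
      Mem W A → Mem W B → ∀ f : A →ₗ[R] B, IsStrictMorphism G f →
      Mem W ↥(LinearMap.ker f) ∧ Mem W ↥(LinearMap.range f) ∧
        Mem W (B ⧸ LinearMap.range f)
  ext_closed : ∀ (A B C : Type) [AddCommGroup A] [Module R A] [AddCommGroup B] [Module R B]
      [AddCommGroup C] [Module R C] (f : A →ₗ[R] B) (g : B →ₗ[R] C),
      Function.Injective f → Function.Surjective g →
      LinearMap.range f = LinearMap.ker g → IsStrictSub G (LinearMap.range f) →
      Mem W A → Mem W C → Mem W B

/-- A stability condition: a real-valued function on modules, invariant under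
isomorphism and additive on short exact sequences of finitely generated modules
(this is exactly a functional on `K₀Λ` applied to dimension vectors). -/
structure StabilityCondition (R : Type) [Ring R] : Type 1 where
  val : ModuleCat.{0} R → ℝ
  iso_inv : ∀ (M N : ModuleCat.{0} R), (↥M ≃ₗ[R] ↥N) → val M = val N
  additive : ∀ (M : ModuleCat.{0} R), Module.Finite R ↥M → ∀ A : Submodule R ↥M,
      val (ModuleCat.of R ↥A) + val (ModuleCat.of R (↥M ⧸ A)) = val M

/-- The value `θ(M)` of a stability condition on a module. -/
def StabilityCondition.app (θ : StabilityCondition R) (M : Type) [AddCommGroup M]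
    [Module R M] : ℝ :=
  θ.val (ModuleCat.of R M)

/-- `𝒫(θ)`: objects which are zero, or on which `θ` is positive together with
all nonzero strict quotients. -/
def memP (G : ModuleCat.{0} R → Prop) (θ : StabilityCondition R)
    (M : Type) [AddCommGroup M] [Module R M] : Prop :=
  Mem G M ∧ (Subsingleton M ∨ (0 < θ.app M ∧
    ∀ A : Submodule R M, IsStrictSub G A → A ≠ ⊤ → 0 < θ.app (M ⧸ A)))

/-- `𝒫̄(θ)`: `θ` is nonnegative on the object and all its strict quotients. -/
def memPbar (G : ModuleCat.{0} R → Prop) (θ : StabilityCondition R)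
    (M : Type) [AddCommGroup M] [Module R M] : Prop :=
  Mem G M ∧ 0 ≤ θ.app M ∧ ∀ A : Submodule R M, IsStrictSub G A → 0 ≤ θ.app (M ⧸ A)

/-- `𝒬(θ)`: objects which are zero, or on which `θ` is negative together with
all nonzero strict subobjects. -/
def memQ (G : ModuleCat.{0} R → Prop) (θ : StabilityCondition R)
    (M : Type) [AddCommGroup M] [Module R M] : Prop :=
  Mem G M ∧ (Subsingleton M ∨ (θ.app M < 0 ∧
    ∀ A : Submodule R M, IsStrictSub G A → A ≠ ⊥ → θ.app ↥A < 0))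

/-- `𝒬̄(θ)`: `θ` is nonpositive on the object and all its strict subobjects. -/
def memQbar (G : ModuleCat.{0} R → Prop) (θ : StabilityCondition R)
    (M : Type) [AddCommGroup M] [Module R M] : Prop :=
  Mem G M ∧ θ.app M ≤ 0 ∧ ∀ A : Submodule R M, IsStrictSub G A → θ.app ↥A ≤ 0

/-- `𝒲(θ)`: θ-semistable objects of `G`; equivalently `θ ∈ D_𝒢(M)`. -/
def memW (G : ModuleCat.{0} R → Prop) (θ : StabilityCondition R)
    (M : Type) [AddCommGroup M] [Module R M] : Prop :=
  Mem G M ∧ θ.app M = 0 ∧ ∀ A : Submodule R M, IsStrictSub G A → θ.app ↥A ≤ 0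

/-- `𝒲₀(θ)`: objects of `𝒲(θ)` with no proper nonzero strict subobject in `𝒲(θ)`. -/
def memW0 (G : ModuleCat.{0} R → Prop) (θ : StabilityCondition R)
    (M : Type) [AddCommGroup M] [Module R M] : Prop :=
  memW G θ M ∧ ∀ A : Submodule R M, IsStrictSub G A → memW G θ ↥A → A = ⊥ ∨ A = ⊤

/-- The linear path `θ_t = t·θ₁ + (1-t)·θ₀` in the stability space. -/
def lineSeg (θ₀ θ₁ : StabilityCondition R) (t : ℝ) : StabilityCondition R where
  val M := t * θ₁.val M + (1 - t) * θ₀.val M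
  iso_inv M N e := by (try simp only []); rw [θ₁.iso_inv M N e, θ₀.iso_inv M N e]
  additive M hM A := by
    have h1 := θ₁.additive M hM A
    have h0 := θ₀.additive M hM A
    try simp only []
    linear_combination t * h1 + (1 - t) * h0

/-- A smooth green path in the stability space. -/
structure IsGreenPath (G : ModuleCat.{0} R → Prop) (θ : ℝ → StabilityCondition R) : Prop where
  smooth : ∀ M : ModuleCat.{0} R, ContDiff ℝ (⊤ : ℕ∞) fun t => (θ t).val M
  green : ∀ (t : ℝ) (M : ModuleCat.{0} R), ¬Subsingleton ↥M → memW G (θ t) ↥M →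
      0 < deriv (fun s => (θ s).val M) t
  eventually_pos : ∃ T : ℝ, ∀ t : ℝ, T < t → ∀ M : ModuleCat.{0} R, G M →
      ¬Subsingleton ↥M → 0 < (θ t).val M
  eventually_neg : ∃ T : ℝ, ∀ t : ℝ, t < T → ∀ M : ModuleCat.{0} R, G M →
      ¬Subsingleton ↥M → (θ t).val M < 0

/-- A filtration `M = c 0 ⊃ c 1 ⊃ ⋯ ⊃ c m = 0` by strict subobjects whose
subquotients `c k / c (k+1)` lie in the slices `W (t k)` with `t` strictly
decreasing. -/
def IsSliceFiltration (G : ModuleCat.{0} R → Prop) {S : Type} [Preorder S]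
    (W : S → ModuleCat.{0} R → Prop) {M : Type} [AddCommGroup M] [Module R M]
    (m : ℕ) (t : Fin m → S) (c : Fin (m + 1) → Submodule R M) : Prop :=
  c 0 = ⊤ ∧ c (Fin.last m) = ⊥ ∧ StrictAnti c ∧ StrictAnti t ∧
  (∀ i, IsStrictSub G (c i)) ∧
  ∀ k : Fin m, W (t k) (ModuleCat.of R
    (↥(c k.castSucc) ⧸ Submodule.comap (c k.castSucc).subtype (c k.succ)))

/-- A strict HN-stratification of `G`: slices are pseudo-wide subcategories
indexed by a totally ordered set, with no nonzero strict morphisms backwards,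
such that every object of `G` has a strict filtration with subquotients in
decreasing slices. -/
structure IsHNStratification (G : ModuleCat.{0} R → Prop) {S : Type} [LinearOrder S]
    (W : S → ModuleCat.{0} R → Prop) : Prop where
  wide : ∀ s : S, IsPseudoWide G (W s)
  no_backward : ∀ s₀ s₁ : S, s₀ < s₁ → ∀ X Y : ModuleCat.{0} R, W s₀ X → W s₁ Y →
      ∀ f : X →ₗ[R] Y, IsStrictMorphism G f → f = 0
  filt : ∀ M : ModuleCat.{0} R, G M → ∃ (m : ℕ) (t : Fin m → S)
      (c : Fin (m + 1) → Submodule R ↥M), IsSliceFiltration G W m t c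

section Aux

variable {R : Type} [Ring R]

theorem app_congr (θ : StabilityCondition R) {M N : Type} [AddCommGroup M] [Module R M]
    [AddCommGroup N] [Module R N] (e : M ≃ₗ[R] N) : θ.app M = θ.app N :=
  θ.iso_inv (ModuleCat.of R M) (ModuleCat.of R N) e

theorem app_additive (θ : StabilityCondition R) {M : Type} [AddCommGroup M] [Module R M]
    [hM : Module.Finite R M] (A : Submodule R M) :
    θ.app ↥A + θ.app (M ⧸ A) = θ.app M :=
  θ.additive (ModuleCat.of R M) hM A

theorem app_subsingleton (θ : StabilityCondition R) {M : Type} [AddCommGroup M] [Module R M]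
    [Subsingleton M] : θ.app M = 0 := by
  have h := app_additive θ (⊤ : Submodule R M)
  have e1 : θ.app ↥(⊤ : Submodule R M) = θ.app M := app_congr θ Submodule.topEquiv
  have e2 : θ.app (M ⧸ (⊤ : Submodule R M)) = θ.app M := by
    refine app_congr θ ?_
    exact LinearEquiv.ofSubsingleton _ _
  rw [e1, e2] at h
  linarith

theorem lineSeg_app (θ₀ θ₁ : StabilityCondition R) (t : ℝ) (M : Type) [AddCommGroup M]
    [Module R M] : (lineSeg θ₀ θ₁ t).app M = t * θ₁.app M + (1 - t) * θ₀.app M := rfl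

theorem mem_congr {G : ModuleCat.{0} R → Prop} (hG : IsTorsionClass G) {M N : Type}
    [AddCommGroup M] [Module R M] [AddCommGroup N] [Module R N] (e : M ≃ₗ[R] N)
    (h : Mem G M) : Mem G N := hG.iso_closed M N e h

theorem mem_zero {G : ModuleCat.{0} R → Prop} (hG : IsTorsionClass G) (M : Type)
    [AddCommGroup M] [Module R M] [Subsingleton M] : Mem G M := hG.zero_mem M inferInstance

theorem isStrictSub_bot {G : ModuleCat.{0} R → Prop} (hG : IsTorsionClass G) {M : Type}
    [AddCommGroup M] [Module R M] : IsStrictSub G (⊥ : Submodule R M) := by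
  refine ⟨mem_zero hG _, fun B' _ => ?_⟩
  rw [bot_inf_eq]
  exact mem_zero hG _

theorem isStrictSub_top {G : ModuleCat.{0} R → Prop} (hG : IsTorsionClass G) {M : Type}
    [AddCommGroup M] [Module R M] (hM : Mem G M) : IsStrictSub G (⊤ : Submodule R M) := by
  refine ⟨mem_congr hG Submodule.topEquiv.symm hM, fun B' hB' => ?_⟩
  rw [top_inf_eq]
  exact hB'

end Aux
section Aux2

variable {R : Type} [Ring R]

theorem mem_map_mkQ {G : ModuleCat.{0} R → Prop} (hG : IsTorsionClass G) {M : Type}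
    [AddCommGroup M] [Module R M] (A : Submodule R M) {B' : Submodule R M}
    (hB' : Mem G ↥B') : Mem G ↥(B'.map A.mkQ) := by
  have hr : LinearMap.range (A.mkQ.comp B'.subtype) = B'.map A.mkQ := by
    rw [LinearMap.range_comp, Submodule.range_subtype]
  rw [← hr]
  exact mem_congr hG (A.mkQ.comp B'.subtype).quotKerEquivRange
    (hG.quot_closed ↥B' _ hB')

theorem isStrictSub_trans {G : ModuleCat.{0} R → Prop} (hG : IsTorsionClass G) {M : Type}
    [AddCommGroup M] [Module R M] {A : Submodule R M} (hA : IsStrictSub G A)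
    {B : Submodule R ↥A} (hB : IsStrictSub G B) : IsStrictSub G (B.map A.subtype) := by
  constructor
  · exact mem_congr hG (Submodule.equivMapOfInjective _ A.injective_subtype B) hB.1
  · intro B' hB'
    set D := Submodule.comap A.subtype B' with hDdef
    have hD : Mem G ↥D := by
      have hmap : D.map A.subtype = A ⊓ B' := Submodule.map_comap_subtype A B'
      have e : ↥D ≃ₗ[R] ↥(A ⊓ B') :=
        (Submodule.equivMapOfInjective _ A.injective_subtype D).trans
          (LinearEquiv.ofEq _ _ hmap)
      exact mem_congr hG e.symm (hA.2 B' hB')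
    have h1 : Mem G ↥(B ⊓ D) := hB.2 D hD
    have h2 : (B ⊓ D).map A.subtype = (B.map A.subtype) ⊓ B' := by
      ext x
      constructor
      · rintro ⟨a, ⟨haB, haD⟩, rfl⟩
        exact ⟨⟨a, haB, rfl⟩, haD⟩
      · rintro ⟨⟨a, haB, rfl⟩, hx⟩
        exact ⟨a, ⟨haB, hx⟩, rfl⟩
    rw [← h2]
    exact mem_congr hG (Submodule.equivMapOfInjective _ A.injective_subtype (B ⊓ D)) h1

theorem map_subtype_lt {M : Type} [AddCommGroup M] [Module R M] {A : Submodule R M}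
    {B : Submodule R ↥A} (hB : B ≠ ⊤) : B.map A.subtype < A := by
  refine lt_of_le_of_ne (Submodule.map_subtype_le A B) fun h => hB ?_
  have := Submodule.comap_map_eq_of_injective A.injective_subtype B
  rw [← this, h, Submodule.comap_subtype_self]

noncomputable def quotQuotEquiv {M : Type} [AddCommGroup M] [Module R M] (A : Submodule R M)
    (B : Submodule R (M ⧸ A)) : ((M ⧸ A) ⧸ B) ≃ₗ[R] M ⧸ (B.comap A.mkQ) := by
  have h : A ≤ B.comap A.mkQ := fun x hx => by
    simp [Submodule.mkQ_apply, (Submodule.Quotient.mk_eq_zero A).2 hx]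
  have h2 : (B.comap A.mkQ).map A.mkQ = B := by
    rw [Submodule.map_comap_eq, Submodule.range_mkQ, top_inf_eq]
  have e := Submodule.quotientQuotientEquivQuotient A (B.comap A.mkQ) h
  rw [h2] at e
  exact e

theorem le_comap_mkQ {M : Type} [AddCommGroup M] [Module R M] (A : Submodule R M)
    (B : Submodule R (M ⧸ A)) : A ≤ B.comap A.mkQ := fun x hx => by
  simp [Submodule.mkQ_apply, (Submodule.Quotient.mk_eq_zero A).2 hx]

theorem lt_comap_mkQ {M : Type} [AddCommGroup M] [Module R M] (A : Submodule R M)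
    {B : Submodule R (M ⧸ A)} (hB : B ≠ ⊥) : A < B.comap A.mkQ := by
  refine lt_of_le_of_ne (le_comap_mkQ A B) fun h => hB ?_
  have h2 : (B.comap A.mkQ).map A.mkQ = B := by
    rw [Submodule.map_comap_eq, Submodule.range_mkQ, top_inf_eq]
  rw [← h2, ← h]
  refine le_antisymm ?_ bot_le
  rintro x ⟨a, ha, rfl⟩
  simp [Submodule.mkQ_apply, (Submodule.Quotient.mk_eq_zero A).2 ha]

end Aux2
section Aux3

variable {R : Type} [Ring R]

theorem isStrictSub_comap_mkQ {G : ModuleCat.{0} R → Prop} (hG : IsTorsionClass G) {M : Type}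
    [AddCommGroup M] [Module R M] {A : Submodule R M} (hA : IsStrictSub G A)
    {B : Submodule R (M ⧸ A)} (hB : IsStrictSub G B) : IsStrictSub G (B.comap A.mkQ) := by
  set A' := B.comap A.mkQ with hA'def
  have hle : A ≤ A' := le_comap_mkQ A B
  constructor
  · -- Mem G ↥A'
    set f : ↥A →ₗ[R] ↥A' := Submodule.inclusion hle
    set g : ↥A' →ₗ[R] ↥B :=
      LinearMap.codRestrict B (A.mkQ.comp A'.subtype) (fun x => x.2)
    have finj : Function.Injective f := Submodule.inclusion_injective hle
    have gsurj : Function.Surjective g := by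
      rintro ⟨b, hb⟩
      obtain ⟨x, hx⟩ := Submodule.mkQ_surjective A b
      have hxA' : x ∈ A' := by
        show A.mkQ x ∈ B
        rw [hx]; exact hb
      exact ⟨⟨x, hxA'⟩, Subtype.ext hx⟩
    have hrange : LinearMap.range f = LinearMap.ker g := by
      rw [Submodule.range_inclusion, show LinearMap.ker g = LinearMap.ker (A.mkQ.comp A'.subtype) from
        LinearMap.ker_codRestrict _ _ _]
      ext x
      simp [Submodule.Quotient.mk_eq_zero]
    exact hG.ext_closed ↥A ↥A' ↥B f g finj gsurj hrange hA.1 hB.1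
  · intro B' hB'
    have himg : Mem G ↥(B ⊓ B'.map A.mkQ) := hB.2 _ (mem_map_mkQ hG A hB')
    have hinfA : Mem G ↥(A ⊓ B') := hA.2 B' hB'
    have hle2 : A ⊓ B' ≤ A' ⊓ B' := inf_le_inf_right B' hle
    set f : ↥(A ⊓ B') →ₗ[R] ↥(A' ⊓ B') := Submodule.inclusion hle2
    set g : ↥(A' ⊓ B') →ₗ[R] ↥(B ⊓ B'.map A.mkQ) :=
      LinearMap.codRestrict _ (A.mkQ.comp (A' ⊓ B').subtype)
        (fun x => ⟨x.2.1, ⟨x.1, x.2.2, rfl⟩⟩)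
    have finj : Function.Injective f := Submodule.inclusion_injective hle2
    have gsurj : Function.Surjective g := by
      rintro ⟨y, hyB, hymap⟩
      obtain ⟨x, hxB', hxy⟩ := hymap
      have hxA' : x ∈ A' := by
        show A.mkQ x ∈ B
        rw [hxy]; exact hyB
      exact ⟨⟨x, hxA', hxB'⟩, Subtype.ext hxy⟩
    have hrange : LinearMap.range f = LinearMap.ker g := by
      rw [Submodule.range_inclusion, show LinearMap.ker g =
        LinearMap.ker (A.mkQ.comp (A' ⊓ B').subtype) from LinearMap.ker_codRestrict _ _ _]
      ext x
      constructor
      · rintro hx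
        have hxA : (x : M) ∈ A ⊓ B' := hx
        simpa [Submodule.Quotient.mk_eq_zero] using hxA.1
      · intro hx
        have hxA : (x : M) ∈ A := by
          simpa [Submodule.Quotient.mk_eq_zero] using hx
        exact ⟨hxA, x.2.2⟩
    exact hG.ext_closed ↥(A ⊓ B') ↥(A' ⊓ B') ↥(B ⊓ B'.map A.mkQ) f g finj gsurj hrange
      hinfA himg

end Aux3
section Aux4

variable {R : Type} [Ring R]

theorem app_eq_of_val_eq {θ θ' : StabilityCondition R}
    (h : ∀ Mc : ModuleCat.{0} R, θ.val Mc = θ'.val Mc) (M : Type) [AddCommGroup M]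
    [Module R M] : θ.app M = θ'.app M := h (ModuleCat.of R M)

theorem memW_congr {G : ModuleCat.{0} R → Prop} {θ θ' : StabilityCondition R}
    (h : ∀ Mc : ModuleCat.{0} R, θ.val Mc = θ'.val Mc) {M : Type} [AddCommGroup M]
    [Module R M] (hw : memW G θ M) : memW G θ' M := by
  obtain ⟨h1, h2, h3⟩ := hw
  exact ⟨h1, (app_eq_of_val_eq h M).symm.trans h2,
    fun A hA => (app_eq_of_val_eq h ↥A) ▸ h3 A hA⟩

theorem memP_congr {G : ModuleCat.{0} R → Prop} {θ θ' : StabilityCondition R}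
    (h : ∀ Mc : ModuleCat.{0} R, θ.val Mc = θ'.val Mc) {M : Type} [AddCommGroup M]
    [Module R M] (hw : memP G θ M) : memP G θ' M := by
  obtain ⟨h1, h2⟩ := hw
  refine ⟨h1, ?_⟩
  rcases h2 with h2 | ⟨hp, hq⟩
  · exact Or.inl h2
  · exact Or.inr ⟨(app_eq_of_val_eq h M) ▸ hp,
      fun A hA hAne => (app_eq_of_val_eq h (M ⧸ A)) ▸ hq A hA hAne⟩

theorem lineSeg_one_val (θ₀ θ₁ : StabilityCondition R) (Mc : ModuleCat.{0} R) :
    (lineSeg θ₀ θ₁ 1).val Mc = θ₁.val Mc := by simp [lineSeg]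

theorem lineSeg_zero_val (θ₀ θ₁ : StabilityCondition R) (Mc : ModuleCat.{0} R) :
    (lineSeg θ₀ θ₁ 0).val Mc = θ₀.val Mc := by simp [lineSeg]

theorem finite_of_mem {G : ModuleCat.{0} R → Prop}
    (hfin : ∀ Mc : ModuleCat.{0} R, G Mc → Module.Finite R ↥Mc) {M : Type} [AddCommGroup M]
    [Module R M] (h : Mem G M) : Module.Finite R M := hfin (ModuleCat.of R M) h

theorem noeth_of_finite (k : Type) [Field k] [Algebra k R] [FiniteDimensional k R]
    {M : Type} [AddCommGroup M] [Module R M] [Module.Finite R M] : IsNoetherian R M := by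
  have : IsNoetherianRing R := isNoetherian_of_tower k inferInstance
  exact isNoetherian_of_isNoetherianRing_of_finite R M

theorem artin_of_finite (k : Type) [Field k] [Algebra k R] [FiniteDimensional k R]
    {M : Type} [AddCommGroup M] [Module R M] [Module.Finite R M] : IsArtinian R M := by
  have : IsArtinianRing R := isArtinian_of_tower k inferInstance
  infer_instance

end Aux4
section Mono

variable {R : Type} [Ring R]

theorem memP_mono (k : Type) [Field k] [Algebra k R] [FiniteDimensional k R]
    (G : ModuleCat.{0} R → Prop) (hG : IsTorsionClass G)
    (hfin : ∀ Mc : ModuleCat.{0} R, G Mc → Module.Finite R ↥Mc)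
    (θ₀ θ₁ : StabilityCondition R)
    (H1 : ∀ (X : Type) [AddCommGroup X] [Module R X], Mem G X → ∀ t : ℝ, 0 < t → t < 1 →
      memW G (lineSeg θ₀ θ₁ t) X → θ₀.app X = 0 ∧ θ₁.app X = 0)
    (H3 : ∀ (X : Type) [AddCommGroup X] [Module R X], memW G θ₁ X → θ₀.app X ≤ 0)
    (M : Type) [AddCommGroup M] [Module R M] (h : memP G θ₀ M) : memP G θ₁ M := by
  obtain ⟨hMG, hrest⟩ := h
  refine ⟨hMG, ?_⟩
  rcases hrest with hs | ⟨hpos, hq⟩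
  · exact Or.inl hs
  haveI : Module.Finite R M := finite_of_mem hfin hMG
  haveI : IsNoetherian R M := noeth_of_finite k
  have wf : WellFounded ((· > ·) : Submodule R M → Submodule R M → Prop) := wellFounded_gt
  -- key claim
  have key : ∀ A : Submodule R M, IsStrictSub G A → A ≠ ⊤ → ∀ t : ℝ, 0 < t → t ≤ 1 →
      (lineSeg θ₀ θ₁ t).app (M ⧸ A) ≤ 0 → False := by
    intro A
    induction A using wf.induction with
    | _ A IH =>
    intro hA hAne t ht0 ht1 hle
    have hQG : Mem G (M ⧸ A) := hG.quot_closed M A hMG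
    haveI : Module.Finite R (M ⧸ A) := finite_of_mem hfin hQG
    set a := θ₀.app (M ⧸ A) with hadef
    set b := θ₁.app (M ⧸ A) with hbdef
    have ha : 0 < a := hq A hA hAne
    have hlin : ∀ s : ℝ, (lineSeg θ₀ θ₁ s).app (M ⧸ A) = s * b + (1 - s) * a := fun s => rfl
    rw [hlin] at hle
    have hab : b < a := by nlinarith
    set t' := a / (a - b) with ht'def
    have hambpos : 0 < a - b := by linarith
    have h0t' : 0 < t' := div_pos ha hambpos
    have ht'le : t' ≤ t := by
      rw [div_le_iff₀ hambpos]
      nlinarith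
    have ht'1 : t' ≤ 1 := le_trans ht'le ht1
    have hzero : (lineSeg θ₀ θ₁ t').app (M ⧸ A) = 0 := by
      have hne : a - b ≠ 0 := ne_of_gt hambpos
      rw [hlin, ht'def]
      field_simp
      ring
    by_cases hss : ∀ B : Submodule R (M ⧸ A), IsStrictSub G B →
        (lineSeg θ₀ θ₁ t').app ↥B ≤ 0
    · have hw : memW G (lineSeg θ₀ θ₁ t') (M ⧸ A) := ⟨hQG, hzero, hss⟩
      rcases lt_or_eq_of_le ht'1 with hlt | heq
      · have := (H1 (M ⧸ A) hQG t' h0t' hlt hw).1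
        exact absurd this (ne_of_gt ha)
      · have hw1 : memW G θ₁ (M ⧸ A) := by
          refine memW_congr (fun Mc => ?_) hw
          rw [heq]
          exact lineSeg_one_val θ₀ θ₁ Mc
        have := H3 (M ⧸ A) hw1
        exact absurd this (not_le.2 ha)
    · push_neg at hss
      obtain ⟨B, hBstrict, hBpos⟩ := hss
      have hBne : B ≠ ⊥ := by
        intro hbot
        rw [hbot] at hBpos
        have : (lineSeg θ₀ θ₁ t').app ↥(⊥ : Submodule R (M ⧸ A)) = 0 := app_subsingleton _
        linarith
      set A' := B.comap A.mkQ with hA'def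
      have hltA : A < A' := lt_comap_mkQ A hBne
      have hA'strict : IsStrictSub G A' := isStrictSub_comap_mkQ hG hA hBstrict
      have happ' : (lineSeg θ₀ θ₁ t').app (M ⧸ A') < 0 := by
        have hadd := app_additive (lineSeg θ₀ θ₁ t') B
        have e : (lineSeg θ₀ θ₁ t').app ((M ⧸ A) ⧸ B) = (lineSeg θ₀ θ₁ t').app (M ⧸ A') :=
          app_congr _ (quotQuotEquiv A B)
        rw [hzero, e] at hadd
        linarith
      have hA'ne : A' ≠ ⊤ := by
        intro htop
        haveI : Subsingleton (M ⧸ A') := Submodule.Quotient.subsingleton_iff.2 htop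
        have : (lineSeg θ₀ θ₁ t').app (M ⧸ A') = 0 := app_subsingleton _
        linarith
      exact IH A' hltA hA'strict hA'ne t' h0t' ht'1 (le_of_lt happ')
  -- conclude
  have hMns : (⊥ : Submodule R M) ≠ ⊤ := by
    intro hbt
    haveI : Subsingleton M := by
      refine ⟨fun x y => ?_⟩
      have hx : x ∈ (⊥ : Submodule R M) := hbt ▸ Submodule.mem_top
      have hy : y ∈ (⊥ : Submodule R M) := hbt ▸ Submodule.mem_top
      rw [Submodule.mem_bot] at hx hy
      rw [hx, hy]
    have : θ₀.app M = 0 := app_subsingleton _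
    linarith
  refine Or.inr ⟨?_, ?_⟩
  · by_contra hle1
    rw [not_lt] at hle1
    refine key ⊥ (isStrictSub_bot hG) hMns 1 one_pos le_rfl ?_
    have e : θ₁.app (M ⧸ (⊥ : Submodule R M)) = θ₁.app M :=
      app_congr _ (Submodule.quotEquivOfEqBot ⊥ rfl)
    rw [lineSeg_app, e]
    linarith
  · intro A hA hAne
    by_contra hle1
    rw [not_lt] at hle1
    refine key A hA hAne 1 one_pos le_rfl ?_
    rw [lineSeg_app]
    linarith

end Mono
section LemD

variable {R : Type} [Ring R]

theorem exists_strict_sub_memP (k : Type) [Field k] [Algebra k R] [FiniteDimensional k R]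
    (G : ModuleCat.{0} R → Prop) (hG : IsTorsionClass G)
    (hfin : ∀ Mc : ModuleCat.{0} R, G Mc → Module.Finite R ↥Mc)
    (θ : StabilityCondition R) {L : Type} [AddCommGroup L] [Module R L] (hL : Mem G L) :
    ∀ A : Submodule R L, IsStrictSub G A → 0 < θ.app ↥A →
      ∃ C : Submodule R L, IsStrictSub G C ∧ ¬ Subsingleton ↥C ∧ memP G θ ↥C := by
  haveI : Module.Finite R L := finite_of_mem hfin hL
  haveI : IsArtinian R L := artin_of_finite k
  have wf : WellFounded ((· < ·) : Submodule R L → Submodule R L → Prop) := wellFounded_lt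
  intro A
  induction A using wf.induction with
  | _ A IH =>
  intro hA hpos
  haveI : Module.Finite R ↥A := finite_of_mem hfin hA.1
  by_cases hq : ∀ B : Submodule R ↥A, IsStrictSub G B → B ≠ ⊤ → 0 < θ.app (↥A ⧸ B)
  · refine ⟨A, hA, ?_, ⟨hA.1, Or.inr ⟨hpos, hq⟩⟩⟩
    intro hs
    haveI := hs
    have : θ.app ↥A = 0 := app_subsingleton _
    linarith
  · push_neg at hq
    obtain ⟨B, hB, hBne, hble⟩ := hq
    have hCA : B.map A.subtype < A := map_subtype_lt hBne
    have hCstrict : IsStrictSub G (B.map A.subtype) := isStrictSub_trans hG hA hB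
    have hCpos : 0 < θ.app ↥(B.map A.subtype) := by
      have hadd := app_additive θ B
      have e : θ.app ↥B = θ.app ↥(B.map A.subtype) :=
        app_congr θ (Submodule.equivMapOfInjective _ A.injective_subtype B)
      linarith
    exact IH _ hCA hCstrict hCpos

theorem cond2_of_memP_eq (k : Type) [Field k] [Algebra k R] [FiniteDimensional k R]
    (G : ModuleCat.{0} R → Prop) (hG : IsTorsionClass G)
    (hfin : ∀ Mc : ModuleCat.{0} R, G Mc → Module.Finite R ↥Mc)
    (θ₀ θ₁ : StabilityCondition R)
    (hP : ∀ Mc : ModuleCat.{0} R, memP G θ₀ ↥Mc ↔ memP G θ₁ ↥Mc)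
    {L : Type} [AddCommGroup L] [Module R L] (hw : memW G θ₀ L) : θ₁.app L ≤ 0 := by
  by_contra hgt
  rw [not_le] at hgt
  have htop : IsStrictSub G (⊤ : Submodule R L) := isStrictSub_top hG hw.1
  have htoppos : 0 < θ₁.app ↥(⊤ : Submodule R L) := by
    rw [app_congr θ₁ Submodule.topEquiv]
    exact hgt
  obtain ⟨C, hCs, hCns, hCP⟩ :=
    exists_strict_sub_memP k G hG hfin θ₁ hw.1 ⊤ htop htoppos
  have hCP0 : memP G θ₀ ↥C := (hP (ModuleCat.of R ↥C)).2 hCP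
  have hpos0 : 0 < θ₀.app ↥C := by
    rcases hCP0.2 with hs | ⟨hp, _⟩
    · exact absurd hs hCns
    · exact hp
  have := hw.2.2 C hCs
  linarith

theorem cond1_of_memP_eq (k : Type) [Field k] [Algebra k R] [FiniteDimensional k R]
    (G : ModuleCat.{0} R → Prop) (hG : IsTorsionClass G)
    (hfin : ∀ Mc : ModuleCat.{0} R, G Mc → Module.Finite R ↥Mc)
    (θ₀ θ₁ : StabilityCondition R)
    (hP : ∀ Mc : ModuleCat.{0} R, memP G θ₀ ↥Mc ↔ memP G θ₁ ↥Mc)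
    {M : Type} [AddCommGroup M] [Module R M] (hM : Mem G M) (t : ℝ) (ht0 : 0 < t)
    (ht1 : t < 1) (hw : memW G (lineSeg θ₀ θ₁ t) M) : θ₀.app M = 0 ∧ θ₁.app M = 0 := by
  have hsum : t * θ₁.app M + (1 - t) * θ₀.app M = 0 := hw.2.1
  have htop : IsStrictSub G (⊤ : Submodule R M) := isStrictSub_top hG hM
  -- helper: a strict sub in both memP classes gives a contradiction with semistability
  have contra : ∀ C : Submodule R M, IsStrictSub G C → ¬ Subsingleton ↥C →
      memP G θ₀ ↥C → memP G θ₁ ↥C → False := by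
    intro C hCs hCns hC0 hC1
    have h0 : 0 < θ₀.app ↥C := by
      rcases hC0.2 with hs | ⟨hp, _⟩
      · exact absurd hs hCns
      · exact hp
    have h1 : 0 < θ₁.app ↥C := by
      rcases hC1.2 with hs | ⟨hp, _⟩
      · exact absurd hs hCns
      · exact hp
    have hle := hw.2.2 C hCs
    rw [lineSeg_app] at hle
    nlinarith
  have hθ1 : θ₁.app M = 0 := by
    rcases lt_trichotomy (θ₁.app M) 0 with hlt | heq | hgt
    · -- then θ₀.app M > 0
      have h0pos : 0 < θ₀.app M := by nlinarith
      have htoppos : 0 < θ₀.app ↥(⊤ : Submodule R M) := by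
        rw [app_congr θ₀ Submodule.topEquiv]
        exact h0pos
      obtain ⟨C, hCs, hCns, hCP⟩ :=
        exists_strict_sub_memP k G hG hfin θ₀ hM ⊤ htop htoppos
      exact absurd (contra C hCs hCns hCP ((hP (ModuleCat.of R ↥C)).1 hCP)) not_false
    · exact heq
    · have htoppos : 0 < θ₁.app ↥(⊤ : Submodule R M) := by
        rw [app_congr θ₁ Submodule.topEquiv]
        exact hgt
      obtain ⟨C, hCs, hCns, hCP⟩ :=
        exists_strict_sub_memP k G hG hfin θ₁ hM ⊤ htop htoppos
      exact absurd (contra C hCs hCns ((hP (ModuleCat.of R ↥C)).2 hCP) hCP) not_false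
  refine ⟨?_, hθ1⟩
  rw [hθ1] at hsum
  have h2 : (1 - t) * θ₀.app M = 0 := by linarith
  rcases mul_eq_zero.mp h2 with h | h
  · linarith
  · exact h

end LemD
theorem statement_16 (k : Type) [Field k] [Algebra k R] [FiniteDimensional k R]
    (G : ModuleCat.{0} R → Prop) (hG : IsTorsionClass G)
    (hfin : ∀ M : ModuleCat.{0} R, G M → Module.Finite R ↥M)
    (θ₀ θ₁ : StabilityCondition R) :
    ((∀ M : ModuleCat.{0} R, (memP G θ₀ ↥M ↔ memP G θ₁ ↥M)) ↔
      ((∀ M : ModuleCat.{0} R, Mem G ↥M → ∀ t : ℝ, 0 < t → t < 1 →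
          memW G (lineSeg θ₀ θ₁ t) ↥M →
          ∀ s : ℝ, s ∈ Set.Icc (0 : ℝ) 1 → (lineSeg θ₀ θ₁ s).app ↥M = 0) ∧
       (∀ L : ModuleCat.{0} R, memW G θ₀ ↥L → θ₁.app ↥L - θ₀.app ↥L ≤ 0) ∧
       (∀ N : ModuleCat.{0} R, memW G θ₁ ↥N → 0 ≤ θ₁.app ↥N - θ₀.app ↥N))) ∧
    (∀ (θa θb : StabilityCondition R) (t : ℝ), 0 ≤ t → t ≤ 1 →
      (∀ M : ModuleCat.{0} R, (memP G θa ↥M ↔ memP G θb ↥M)) →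
      ∀ M : ModuleCat.{0} R, (memP G (lineSeg θa θb t) ↥M ↔ memP G θa ↥M)) := by
  constructor
  · constructor
    · intro hP
      refine ⟨?_, ?_, ?_⟩
      · intro Mc hMc t ht0 ht1 hw s _
        obtain ⟨h0, h1⟩ := cond1_of_memP_eq k G hG hfin θ₀ θ₁ hP hMc t ht0 ht1 hw
        rw [lineSeg_app, h0, h1]
        ring
      · intro L hwL
        have h1 := cond2_of_memP_eq k G hG hfin θ₀ θ₁ hP hwL
        have h0 : θ₀.app ↥L = 0 := hwL.2.1
        linarith
      · intro N hwN
        have h1 := cond2_of_memP_eq k G hG hfin θ₁ θ₀ (fun Mc => (hP Mc).symm) hwN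
        have h0 : θ₁.app ↥N = 0 := hwN.2.1
        linarith
    · rintro ⟨H1, H2, H3⟩ M
      constructor
      · intro h
        refine memP_mono k G hG hfin θ₀ θ₁ ?_ ?_ ↥M h
        · intro X _ _ hX t ht0 ht1 hw
          have hall : ∀ s ∈ Set.Icc (0:ℝ) 1, (lineSeg θ₀ θ₁ s).app X = 0 :=
            H1 (ModuleCat.of R X) hX t ht0 ht1 hw
          constructor
          · have := hall 0 (Set.mem_Icc.mpr ⟨le_refl 0, by norm_num⟩)
            rw [lineSeg_app] at this
            linarith
          · have := hall 1 (Set.mem_Icc.mpr ⟨by norm_num, le_refl 1⟩)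
            rw [lineSeg_app] at this
            linarith
        · intro X _ _ hw
          have : 0 ≤ θ₁.app X - θ₀.app X := H3 (ModuleCat.of R X) hw
          have h1 : θ₁.app X = 0 := hw.2.1
          linarith
      · intro h
        refine memP_mono k G hG hfin θ₁ θ₀ ?_ ?_ ↥M h
        · intro X _ _ hX t ht0 ht1 hw
          have hw' : memW G (lineSeg θ₀ θ₁ (1 - t)) X := by
            refine memW_congr (fun Mc => ?_) hw
            show (lineSeg θ₁ θ₀ t).val Mc = (lineSeg θ₀ θ₁ (1 - t)).val Mc
            simp only [lineSeg]
            ring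
          have hall : ∀ s ∈ Set.Icc (0:ℝ) 1, (lineSeg θ₀ θ₁ s).app X = 0 :=
            H1 (ModuleCat.of R X) hX (1 - t) (by linarith) (by linarith) hw'
          constructor
          · have := hall 1 (Set.mem_Icc.mpr ⟨by norm_num, le_refl 1⟩)
            rw [lineSeg_app] at this
            linarith
          · have := hall 0 (Set.mem_Icc.mpr ⟨le_refl 0, by norm_num⟩)
            rw [lineSeg_app] at this
            linarith
        · intro X _ _ hw
          have : θ₁.app X - θ₀.app X ≤ 0 := H2 (ModuleCat.of R X) hw
          have h0 : θ₀.app X = 0 := hw.2.1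
          linarith
  · intro θa θb t ht0 ht1 hP M
    rcases eq_or_lt_of_le ht0 with h0 | h0pos
    · have hval : ∀ Mc : ModuleCat.{0} R, (lineSeg θa θb t).val Mc = θa.val Mc := by
        intro Mc
        rw [← h0]
        exact lineSeg_zero_val θa θb Mc
      exact ⟨memP_congr hval, memP_congr (fun Mc => (hval Mc).symm)⟩
    · constructor
      · intro h
        refine memP_mono k G hG hfin (lineSeg θa θb t) θa ?_ ?_ ↥M h
        · intro X _ _ hX s hs0 hs1 hw
          have hu0 : 0 < (1 - s) * t := mul_pos (by linarith) h0pos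
          have hu1 : (1 - s) * t < 1 := by nlinarith
          have hw' : memW G (lineSeg θa θb ((1 - s) * t)) X := by
            refine memW_congr (fun Mc => ?_) hw
            show (lineSeg (lineSeg θa θb t) θa s).val Mc = (lineSeg θa θb ((1 - s) * t)).val Mc
            simp only [lineSeg]
            ring
          have hpair := cond1_of_memP_eq k G hG hfin θa θb hP hX _ hu0 hu1 hw'
          constructor
          · rw [lineSeg_app, hpair.1, hpair.2]
            ring
          · exact hpair.1
        · intro X _ _ hw
          have hb := cond2_of_memP_eq k G hG hfin θa θb hP hw
          have ha0 : θa.app X = 0 := hw.2.1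
          rw [lineSeg_app, ha0]
          nlinarith
      · intro h
        refine memP_mono k G hG hfin θa (lineSeg θa θb t) ?_ ?_ ↥M h
        · intro X _ _ hX s hs0 hs1 hw
          have hu0 : 0 < s * t := mul_pos hs0 h0pos
          have hu1 : s * t < 1 := by nlinarith
          have hw' : memW G (lineSeg θa θb (s * t)) X := by
            refine memW_congr (fun Mc => ?_) hw
            show (lineSeg θa (lineSeg θa θb t) s).val Mc = (lineSeg θa θb (s * t)).val Mc
            simp only [lineSeg]
            ring
          have hpair := cond1_of_memP_eq k G hG hfin θa θb hP hX _ hu0 hu1 hw'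
          refine ⟨hpair.1, ?_⟩
          rw [lineSeg_app, hpair.1, hpair.2]
          ring
        · intro X _ _ hw
          rcases lt_or_eq_of_le ht1 with hlt | heq
          · exact le_of_eq (cond1_of_memP_eq k G hG hfin θa θb hP hw.1 t h0pos hlt hw).1
          · have hwb : memW G θb X := by
              refine memW_congr (fun Mc => ?_) hw
              rw [heq]
              exact lineSeg_one_val θa θb Mc
            exact cond2_of_memP_eq k G hG hfin θb θa (fun Mc => (hP Mc).symm) hwb

end PaperTC
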